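/- Fix a unit quaternion h and define, for x in the unit quaternions S³, the maps α₂(x) = −2 h x j x⁻¹ h⁻¹ and α₃(x) = −2 h x k x⁻¹ h⁻¹. For a quaternion w, let X_w denote the directional (Fréchet) derivative at x in direction w, and write X₁, X₂, X₃ for the derivatives in the directions xi, xj, xk respectively. Then at every x ∈ S³: X₁(α₂) = 2α₃, X₁(α₃) = −2α₂, X₂(α₂) = 0, X₂(α₃) = −α₂×α₃, X₃(α₂) = α₂×α₃, X₃(α₃) = 0, where α₂×α₃(x) = 4 h x i x⁻¹ h⁻¹. -/

import Mathlib

noncomputable section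

open Quaternion

/-- The imaginary quaternion unit `i`. -/
def qi : ℍ[ℝ] := ⟨0, 1, 0, 0⟩

/-- The imaginary quaternion unit `j`. -/
def qj : ℍ[ℝ] := ⟨0, 0, 1, 0⟩

/-- The imaginary quaternion unit `k`. -/
def qk : ℍ[ℝ] := ⟨0, 0, 0, 1⟩

/-- Euclidean inner product on the quaternions: `⟨x,y⟩ = Re (x * star y)`. -/
def ipQ (x y : ℍ[ℝ]) : ℝ := (x * star y).re

/-- Cross product of (imaginary) quaternions: `α × β = ½(αβ − βα)`. -/
def crossQ (a b : ℍ[ℝ]) : ℍ[ℝ] := (1 / 2 : ℝ) • (a * b - b * a)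

/-!
By the product rule and `d(y⁻¹) = -y⁻¹ dy y⁻¹`, the map `y ↦ a y q y⁻¹ b` has derivative
`a x (v q - q v) x⁻¹ b` at `x` in the direction `x v`. For `a = h`, `b = h⁻¹` every quantity in
the statement is then the image of a quaternion under the conjugation `e ↦ g e g⁻¹`, `g = h x`,
which is multiplicative; what remains is the multiplication table of `i, j, k`.
-/

theorem conj_mul₀ {G : Type*} [GroupWithZero G] (g a b : G) :
    g * a * g⁻¹ * (g * b * g⁻¹) = g * (a * b) * g⁻¹ := by
  rcases eq_or_ne g 0 with rfl | hg
  · simp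
  · simp [mul_assoc, inv_mul_cancel_left₀ hg]

section Derivative

variable {𝕜 : Type*} [NontriviallyNormedField 𝕜] {R : Type*} [NormedDivisionRing R]
  [NormedAlgebra 𝕜 R]

open ContinuousLinearMap in
theorem fderiv_mul_conj_apply_mul (a q b x v : R) :
    fderiv 𝕜 (fun y => a * y * q * y⁻¹ * b) x (x * v) = a * x * (v * q - q * v) * x⁻¹ * b := by
  rcases eq_or_ne x 0 with rfl | hx
  · simp -- the direction `x * v` vanishes, and so does the right side since `0⁻¹ = 0`
  have hleft : HasFDerivAt (fun y : R => a * y * q) (mulLeftRight 𝕜 R a q) x :=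
    (mulLeftRight 𝕜 R a q).hasFDerivAt
  have hconj : HasFDerivAt (fun y => a * y * q * y⁻¹ * b) _ x :=
    (hleft.mul' (hasFDerivAt_inv' hx)).mul_const' b
  rw [hconj.fderiv]
  simp [mulLeftRight_apply, mul_assoc, inv_mul_cancel_left₀ hx]
  noncomm_ring

theorem fderiv_neg_smul_mul_conj_apply_mul (c : 𝕜) (a q b x v : R) :
    fderiv 𝕜 (fun y => -(c • (a * y * q * y⁻¹ * b))) x (x * v)
      = -(c • (a * x * (v * q - q * v) * x⁻¹ * b)) := by
  have hsmul : fderiv 𝕜 (fun y => c • (a * y * q * y⁻¹ * b)) x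
      = c • fderiv 𝕜 (fun y => a * y * q * y⁻¹ * b) x :=
    congrFun (fderiv_const_smul_field c) x
  rw [fderiv_fun_neg, neg_apply, hsmul, smul_apply, fderiv_mul_conj_apply_mul]

end Derivative

theorem qi_mul_qj : qi * qj = qk := by
  ext <;> simp [re_mul, imI_mul, imJ_mul, imK_mul] <;> simp [qi, qj, qk]

theorem qj_mul_qi : qj * qi = -qk := by
  ext <;> simp [re_mul, imI_mul, imJ_mul, imK_mul] <;> simp [qi, qj, qk]

theorem qi_mul_qk : qi * qk = -qj := by
  ext <;> simp [re_mul, imI_mul, imJ_mul, imK_mul] <;> simp [qi, qj, qk]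

theorem qk_mul_qi : qk * qi = qj := by
  ext <;> simp [re_mul, imI_mul, imJ_mul, imK_mul] <;> simp [qi, qj, qk]

theorem qj_mul_qk : qj * qk = qi := by
  ext <;> simp [re_mul, imI_mul, imJ_mul, imK_mul] <;> simp [qi, qj, qk]

theorem qk_mul_qj : qk * qj = -qi := by
  ext <;> simp [re_mul, imI_mul, imJ_mul, imK_mul] <;> simp [qi, qj, qk]

theorem stmt15_general (h : ℍ[ℝ])
    (α₂ α₃ : ℍ[ℝ] → ℍ[ℝ])
    (hα₂ : α₂ = fun x => -((2 : ℝ) • (h * x * qj * x⁻¹ * h⁻¹)))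
    (hα₃ : α₃ = fun x => -((2 : ℝ) • (h * x * qk * x⁻¹ * h⁻¹)))
    (x : ℍ[ℝ]) :
    crossQ (α₂ x) (α₃ x) = (4 : ℝ) • (h * x * qi * x⁻¹ * h⁻¹) ∧
    fderiv ℝ α₂ x (x * qi) = (2 : ℝ) • α₃ x ∧
    fderiv ℝ α₃ x (x * qi) = -((2 : ℝ) • α₂ x) ∧
    fderiv ℝ α₂ x (x * qj) = 0 ∧
    fderiv ℝ α₃ x (x * qj) = -(crossQ (α₂ x) (α₃ x)) ∧
    fderiv ℝ α₂ x (x * qk) = crossQ (α₂ x) (α₃ x) ∧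
    fderiv ℝ α₃ x (x * qk) = 0 := by
  subst hα₂ hα₃
  simp only [fderiv_neg_smul_mul_conj_apply_mul]
  set g := h * x
  have hconj (e : ℍ[ℝ]) : g * e * x⁻¹ * h⁻¹ = g * e * g⁻¹ := by simp [g, mul_assoc]
  have hcross : crossQ (-((2 : ℝ) • (g * qj * g⁻¹))) (-((2 : ℝ) • (g * qk * g⁻¹)))
      = (4 : ℝ) • (g * qi * g⁻¹) := by
    simp only [crossQ, smul_mul_smul_comm, conj_mul₀, qj_mul_qk, qk_mul_qj, mul_neg, neg_mul]
    module
  simp only [hconj, hcross, qi_mul_qj, qj_mul_qi, qi_mul_qk, qk_mul_qi, qj_mul_qk, qk_mul_qj,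
    sub_self, mul_sub, sub_mul, mul_neg, neg_mul, mul_zero, zero_mul]
  refine ⟨trivial, ?_, ?_, ?_, ?_, ?_, ?_⟩ <;> module

/-- the directional derivatives of `α₂(x) = −2hxjx⁻¹h⁻¹` and
`α₃(x) = −2hxkx⁻¹h⁻¹` at `x ∈ S³` in the directions `xi, xj, xk` satisfy
`X₁(α₂) = 2α₃`, `X₁(α₃) = −2α₂`, `X₂(α₂) = 0`, `X₂(α₃) = −α₂×α₃`,
`X₃(α₂) = α₂×α₃`, `X₃(α₃) = 0`, where `α₂×α₃ = 4hxix⁻¹h⁻¹`. -/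
theorem stmt15 (h : ℍ[ℝ]) (hh : ‖h‖ = 1)
    (α₂ α₃ : ℍ[ℝ] → ℍ[ℝ])
    (hα₂ : α₂ = fun x => -((2 : ℝ) • (h * x * qj * x⁻¹ * h⁻¹)))
    (hα₃ : α₃ = fun x => -((2 : ℝ) • (h * x * qk * x⁻¹ * h⁻¹)))
    (x : ℍ[ℝ]) (hx : ‖x‖ = 1) :
    crossQ (α₂ x) (α₃ x) = (4 : ℝ) • (h * x * qi * x⁻¹ * h⁻¹) ∧
    fderiv ℝ α₂ x (x * qi) = (2 : ℝ) • α₃ x ∧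
    fderiv ℝ α₃ x (x * qi) = -((2 : ℝ) • α₂ x) ∧
    fderiv ℝ α₂ x (x * qj) = 0 ∧
    fderiv ℝ α₃ x (x * qj) = -(crossQ (α₂ x) (α₃ x)) ∧
    fderiv ℝ α₂ x (x * qk) = crossQ (α₂ x) (α₃ x) ∧
    fderiv ℝ α₃ x (x * qk) = 0 :=
  stmt15_general h α₂ α₃ hα₂ hα₃ x
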